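/- Let m ∈ ℕ, n = 2m+1, and let s : Fin n → ℝ be injective. Define the median med(s) as the (m+1)-th smallest value of s, i.e., med(s) = (s ∘ σ) m for any permutation σ of Fin n such that s ∘ σ is monotone. Let k ∈ Fin n and let s̃ : Fin n → ℝ satisfy s̃ j = s j for every j ≠ k. If s k < med(s) and s̃ k > med(s), then med(s̃) > med(s); symmetrically, if s k > med(s) and s̃ k < med(s), then med(s̃) < med(s). -/

import Mathlib

/-!
Let `M = s (σ i)`. If the values of `s` are distinct, exactly `n - 1 - i` of them lie strictly
above `M`. Moving `s k` from below `M` to above it yields a tuple with `n - i` values above `M`,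
while any tuple has at most `n - 1 - i` values above its own `i`-th order statistic; so that
statistic must exceed `M`. The downward case is the same argument in the order dual.
-/

open Finset

namespace Tuple

variable {α : Type*} [LinearOrder α] {n : ℕ} {t : Fin n → α} {τ : Equiv.Perm (Fin n)}

lemma card_filter_apply_lt_le (h : Monotone (t ∘ τ)) (i : Fin n) :
    #{j | t (τ i) < t j} ≤ n - 1 - i := by
  rw [← Fin.card_Ioi i, ← (Ioi i).card_map τ.toEmbedding]
  refine card_le_card fun j hj => ?_
  obtain ⟨l, rfl⟩ := τ.surjective j
  exact mem_map_of_mem _ (mem_Ioi.2 (h.reflect_lt (by simpa using hj)))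

lemma card_filter_apply_lt_eq (h : StrictMono (t ∘ τ)) (i : Fin n) :
    #{j | t (τ i) < t j} = n - 1 - i := by
  refine (card_filter_apply_lt_le h.monotone i).antisymm ?_
  rw [← Fin.card_Ioi i, ← (Ioi i).card_map τ.toEmbedding]
  refine card_le_card fun j hj => ?_
  obtain ⟨l, hl, rfl⟩ := mem_map.1 hj
  simpa using h (mem_Ioi.1 hl)

lemma lt_apply_of_lt_card_filter (h : Monotone (t ∘ τ)) (i : Fin n) {M : α}
    (hM : n - 1 - i < #{j | M < t j}) : M < t (τ i) := by
  by_contra! hle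
  have hsub : ({j | M < t j} : Finset (Fin n)) ⊆ ({j | t (τ i) < t j} : Finset (Fin n)) :=
    monotone_filter_right _ fun _ _ => hle.trans_lt
  exact (card_le_card hsub |>.trans (card_filter_apply_lt_le h i)).not_gt hM

variable {s : Fin n → α} {σ : Equiv.Perm (Fin n)} {k : Fin n}

lemma lt_apply_of_update_cross_up (hs : StrictMono (s ∘ σ)) (hτ : Monotone (t ∘ τ))
    (hts : ∀ j, j ≠ k → t j = s j) (i : Fin n) (hk : s k < s (σ i)) (hk' : s (σ i) < t k) :
    s (σ i) < t (τ i) := by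
  refine lt_apply_of_lt_card_filter hτ i ?_
  have hsub : insert k ({j | s (σ i) < s j} : Finset (Fin n)) ⊆
      ({j | s (σ i) < t j} : Finset (Fin n)) := by
    intro j hj
    rcases eq_or_ne j k with rfl | hjk
    · simpa using hk'
    · simpa [hts j hjk, hjk] using hj
  have hk_notMem : k ∉ ({j | s (σ i) < s j} : Finset (Fin n)) := by simpa using hk.le
  calc n - 1 - i < #(insert k ({j | s (σ i) < s j} : Finset (Fin n))) := by
        rw [card_insert_of_notMem hk_notMem, card_filter_apply_lt_eq hs i]
        exact lt_add_one _
    _ ≤ _ := card_le_card hsub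

lemma apply_lt_of_update_cross_down (hs : StrictMono (s ∘ σ)) (hτ : Monotone (t ∘ τ))
    (hts : ∀ j, j ≠ k → t j = s j) (i : Fin n) (hk : s (σ i) < s k) (hk' : t k < s (σ i)) :
    t (τ i) < s (σ i) := by
  have hs' : StrictMono ((OrderDual.toDual ∘ s) ∘ ⇑(σ * Fin.revPerm : Equiv.Perm (Fin n))) :=
    (hs.comp_strictAnti Fin.rev_strictAnti).dual_right
  have hτ' : Monotone ((OrderDual.toDual ∘ t) ∘ ⇑(τ * Fin.revPerm : Equiv.Perm (Fin n))) :=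
    (hτ.comp_antitone Fin.rev_anti).dual_right
  simpa using lt_apply_of_update_cross_up hs' hτ' (k := k) (by simpa using hts) i.rev
    (by simpa using hk) (by simpa using hk')

end Tuple

/-- Crossing the median changes the median: for distinct values, if `s̃` agrees with
`s` except at `k` and `s k`, `s̃ k` lie strictly on opposite sides of the median of
`s`, then the median strictly moves in the corresponding direction. Here the median of
a `(2m+1)`-tuple is its `(m+1)`-th smallest value, obtained via any sorting
permutation. -/
theorem stmt_16 (m : ℕ) (s : Fin (2 * m + 1) → ℝ) (hs : Function.Injective s)
    (st : Fin (2 * m + 1) → ℝ) (k : Fin (2 * m + 1))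
    (hst : ∀ j, j ≠ k → st j = s j)
    (σ σ' : Equiv.Perm (Fin (2 * m + 1)))
    (hσ : Monotone (s ∘ σ)) (hσ' : Monotone (st ∘ σ')) :
    (s k < s (σ ⟨m, by omega⟩) ∧ st k > s (σ ⟨m, by omega⟩) →
      st (σ' ⟨m, by omega⟩) > s (σ ⟨m, by omega⟩)) ∧
    (s k > s (σ ⟨m, by omega⟩) ∧ st k < s (σ ⟨m, by omega⟩) →
      st (σ' ⟨m, by omega⟩) < s (σ ⟨m, by omega⟩)) := by
  have hσs : StrictMono (s ∘ σ) := hσ.strictMono_of_injective (hs.comp σ.injective)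
  exact ⟨fun ⟨hk, hk'⟩ => Tuple.lt_apply_of_update_cross_up hσs hσ' hst _ hk hk',
    fun ⟨hk, hk'⟩ => Tuple.apply_lt_of_update_cross_down hσs hσ' hst _ hk hk'⟩
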